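/- arXiv:2502.03496 — 5 statements merged into one kernel-verified Lean document; each statement's English description precedes it below -/
import Mathlib

section
/- Let F be the N×N DFT matrix with entries F_{mn} = ω^{(m-1)(n-1)} where ω = e^{-2πi/N}, and write F = A + Bi with A, B real. Then A·B = B·A = 0 (the zero matrix). -/
/-! Both `F * F` and `conj F * F` have real entries: each entry is a sum `∑ₙ ζⁿ` over an `N`-th
root of unity `ζ`, which is `N` or `0`. Since `F * F = A² - B² + i (AB + BA)` and
`conj F * F = A² + B² + i (AB - BA)`, both `AB + BA` and `AB - BA` vanish. -/

open Matrix Complex Finset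

lemma im_geom_sum_eq_zero_of_pow_eq_one {ζ : ℂ} {N : ℕ} (hζ : ζ ^ N = 1) :
    (∑ n ∈ range N, ζ ^ n).im = 0 := by
  rcases eq_or_ne ζ 1 with rfl | hζ1
  · simp
  · rw [geom_sum_eq hζ1, hζ, sub_self, zero_div, zero_im]

lemma im_sum_exp_two_pi_I_mul_div_eq_zero (N : ℕ) (j : ℤ) :
    (∑ n : Fin N, exp (2 * Real.pi * I * j * n / N)).im = 0 := by
  rcases N.eq_zero_or_pos with rfl | hN
  · simp
  have hN' : (N : ℂ) ≠ 0 := by exact_mod_cast hN.ne'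
  set ζ := exp (2 * Real.pi * I * j / N)
  have hpow (n : ℕ) : exp (2 * Real.pi * I * j * n / N) = ζ ^ n := by
    rw [← exp_nat_mul]; ring_nf
  have hζ : ζ ^ N = 1 := by
    rw [← hpow, mul_div_cancel_right₀ _ hN', ← exp_int_mul_two_pi_mul_I j]
    ring_nf
  rw [Fin.sum_univ_eq_sum_range (fun n => exp (2 * Real.pi * I * j * n / N))]
  simp only [hpow]
  exact im_geom_sum_eq_zero_of_pow_eq_one hζ

lemma Matrix.map_im_mul {l m n : Type*} [Fintype m] (F : Matrix l m ℂ) (G : Matrix m n ℂ) :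
    (F * G).map im = F.map re * G.map im + F.map im * G.map re := by
  ext i k
  simp [mul_apply, im_sum, mul_im, Finset.sum_add_distrib]

lemma Matrix.map_im_map_conj_mul {l m n : Type*} [Fintype m] (F : Matrix l m ℂ)
    (G : Matrix m n ℂ) :
    (F.map (starRingEnd ℂ) * G).map im = F.map re * G.map im - F.map im * G.map re := by
  ext i k
  simp [mul_apply, im_sum, mul_im, sub_eq_add_neg, Finset.sum_add_distrib]

theorem dft_re_im_mul_eq_zero_general (N : ℕ)
    (F : Matrix (Fin N) (Fin N) ℂ)
    (hF : ∀ m n : Fin N, F m n = Complex.exp (-2 * Real.pi * Complex.I * (m : ℕ) * (n : ℕ) / N))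
    (A B : Matrix (Fin N) (Fin N) ℝ)
    (hA : ∀ m n, A m n = (F m n).re) (hB : ∀ m n, B m n = (F m n).im) :
    A * B = 0 ∧ B * A = 0 := by
  have hA' : F.map re = A := ext fun m n => (hA m n).symm
  have hB' : F.map im = B := ext fun m n => (hB m n).symm
  have hsq : A * B + B * A = 0 := by
    rw [← hA', ← hB', ← map_im_mul]
    ext m k
    simp only [mul_apply, map_apply, Matrix.zero_apply]
    convert im_sum_exp_two_pi_I_mul_div_eq_zero N (-(m + k : ℤ)) using 3 with n
    rw [hF, hF, ← exp_add]
    push_cast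
    ring_nf
  have hconj : A * B - B * A = 0 := by
    rw [← hA', ← hB', ← map_im_map_conj_mul]
    ext m k
    simp only [mul_apply, map_apply, Matrix.zero_apply]
    convert im_sum_exp_two_pi_I_mul_div_eq_zero N (m - k : ℤ) using 3 with n
    rw [hF, hF, ← Complex.exp_conj, ← exp_add]
    simp only [map_div₀, map_mul, map_neg, map_ofNat, conj_ofReal, conj_I, map_natCast]
    push_cast
    ring_nf
  constructor <;> ext m k <;>
    · have h1 := congr_fun₂ hsq m k
      have h2 := congr_fun₂ hconj m k
      simp only [Matrix.add_apply, Matrix.sub_apply, Matrix.zero_apply] at h1 h2 ⊢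
      linarith

theorem dft_re_im_mul_eq_zero (N : ℕ) (hN : 0 < N)
    (F : Matrix (Fin N) (Fin N) ℂ)
    (hF : ∀ m n : Fin N, F m n = Complex.exp (-2 * Real.pi * Complex.I * (m : ℕ) * (n : ℕ) / N))
    (A B : Matrix (Fin N) (Fin N) ℝ)
    (hA : ∀ m n, A m n = (F m n).re) (hB : ∀ m n, B m n = (F m n).im) :
    A * B = 0 ∧ B * A = 0 :=
  dft_re_im_mul_eq_zero_general N F hF A B hA hB
end

section
/- Let A, B be real symmetric matrices with AB = BA = 0 and A² + B² = N·I, and Λ a diagonal matrix with entries in [0,1]. With P = (1/N)(AΛA + BΛB) and Q = (1/N)(AΛB + BΛA), it holds that P² + Q² ⪯ P, and consequently Q² ⪯ P - P². -/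
/-! Since `A B = B A = 0`, every mixed term in `P² + Q²` containing `A B` or `B A` vanishes, and the
surviving terms assemble to `N⁻² (A Λ (A² + B²) Λ A + B Λ (A² + B²) Λ B) = N⁻¹ (A Λ² A + B Λ² B)`.
Hence `P - P² - Q² = N⁻¹ (A (Λ - Λ²) A + B (Λ - Λ²) B)`, a sum of congruences of the diagonal
matrix `Λ - Λ²`, whose entries `λ (1 - λ)` are nonnegative because `0 ≤ λ ≤ 1`. -/

open Matrix

section Identity

variable {R : Type*} [Ring R]

theorem sandwich_mul_self_add_cross_mul_self {a b l : R} (hab : a * b = 0) (hba : b * a = 0) :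
    (a * l * a + b * l * b) * (a * l * a + b * l * b)
      + (a * l * b + b * l * a) * (a * l * b + b * l * a)
      = a * l * (a * a + b * b) * l * a + b * l * (a * a + b * b) * l * b := by
  have hab' : ∀ x, a * (b * x) = 0 := fun x => by rw [← mul_assoc, hab, zero_mul]
  have hba' : ∀ x, b * (a * x) = 0 := fun x => by rw [← mul_assoc, hba, zero_mul]
  simp only [mul_add, add_mul, mul_assoc, hab', hba', mul_zero, add_zero, zero_add]
  abel

variable {K : Type*} [Field K] [Algebra K R]

theorem sandwich_sub_mul_self_add_cross_mul_self {a b l : R} {c : K}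
    (hab : a * b = 0) (hba : b * a = 0) (hsum : a * a + b * b = c • 1) :
    c⁻¹ • (a * l * a + b * l * b)
      - (c⁻¹ • (a * l * a + b * l * b) * c⁻¹ • (a * l * a + b * l * b)
        + c⁻¹ • (a * l * b + b * l * a) * c⁻¹ • (a * l * b + b * l * a))
      = c⁻¹ • (a * (l - l * l) * a + b * (l - l * l) * b) := by
  have hsq : c⁻¹ • (a * l * a + b * l * b) * c⁻¹ • (a * l * a + b * l * b)
      + c⁻¹ • (a * l * b + b * l * a) * c⁻¹ • (a * l * b + b * l * a)
      = c⁻¹ • (a * (l * l) * a + b * (l * l) * b) := by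
    rw [smul_mul_smul, smul_mul_smul, ← smul_add, sandwich_mul_self_add_cross_mul_self hab hba,
      hsum]
    simp only [mul_smul_comm, smul_mul_assoc, mul_one, ← smul_add, smul_smul, mul_assoc]
    -- `c⁻¹ * (c⁻¹ * c) = c⁻¹` holds in every field, `c = 0` included
    congr 1
    rw [mul_comm c⁻¹ c, ← mul_assoc]
    simpa only [inv_inv] using mul_inv_mul_cancel c⁻¹
  rw [hsq, ← smul_sub]
  congr 1
  simp only [mul_sub, sub_mul]
  abel

end Identity

theorem Matrix.posSemidef_diagonal_sub_mul_self {n : Type*} [Fintype n] [DecidableEq n]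
    {d : n → ℝ} (hd : ∀ i, d i ∈ Set.Icc (0 : ℝ) 1) :
    (diagonal d - diagonal d * diagonal d).PosSemidef := by
  rw [diagonal_mul_diagonal, diagonal_sub, posSemidef_diagonal_iff]
  intro i
  nlinarith [(hd i).1, (hd i).2]

theorem Matrix.PosSemidef.mul_mul_self_of_isSymm {n : Type*} [Fintype n] {D A : Matrix n n ℝ}
    (hD : D.PosSemidef) (hA : A.IsSymm) : (A * D * A).PosSemidef := by
  simpa only [conjTranspose_eq_transpose_of_trivial, hA.eq] using hD.mul_mul_conjTranspose_same A

theorem P_sq_add_Q_sq_le_P_general {N : ℕ}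
    (A B : Matrix (Fin N) (Fin N) ℝ)
    (hAs : A.IsSymm) (hBs : B.IsSymm)
    (hAB : A * B = 0) (hBA : B * A = 0)
    (hsum : A * A + B * B = (N : ℝ) • (1 : Matrix (Fin N) (Fin N) ℝ))
    (d : Fin N → ℝ) (hd : ∀ i, d i ∈ Set.Icc (0 : ℝ) 1)
    (P Q : Matrix (Fin N) (Fin N) ℝ)
    (hP : P = ((N : ℝ)⁻¹) • (A * Matrix.diagonal d * A + B * Matrix.diagonal d * B))
    (hQ : Q = ((N : ℝ)⁻¹) • (A * Matrix.diagonal d * B + B * Matrix.diagonal d * A)) :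
    (P - (P * P + Q * Q)).PosSemidef ∧ ((P - P * P) - Q * Q).PosSemidef := by
  have hΛ := posSemidef_diagonal_sub_mul_self hd
  have hPQ : (P - (P * P + Q * Q)).PosSemidef := by
    rw [hP, hQ, sandwich_sub_mul_self_add_cross_mul_self hAB hBA hsum]
    exact ((hΛ.mul_mul_self_of_isSymm hAs).add (hΛ.mul_mul_self_of_isSymm hBs)).smul
      (inv_nonneg.mpr N.cast_nonneg)
  exact ⟨hPQ, sub_sub P (P * P) (Q * Q) ▸ hPQ⟩

theorem P_sq_add_Q_sq_le_P {N : ℕ} (hN : 0 < N)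
    (A B : Matrix (Fin N) (Fin N) ℝ)
    (hAs : A.IsSymm) (hBs : B.IsSymm)
    (hAB : A * B = 0) (hBA : B * A = 0)
    (hsum : A * A + B * B = (N : ℝ) • (1 : Matrix (Fin N) (Fin N) ℝ))
    (d : Fin N → ℝ) (hd : ∀ i, d i ∈ Set.Icc (0 : ℝ) 1)
    (P Q : Matrix (Fin N) (Fin N) ℝ)
    (hP : P = ((N : ℝ)⁻¹) • (A * Matrix.diagonal d * A + B * Matrix.diagonal d * B))
    (hQ : Q = ((N : ℝ)⁻¹) • (A * Matrix.diagonal d * B + B * Matrix.diagonal d * A)) :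
    (P - (P * P + Q * Q)).PosSemidef ∧ ((P - P * P) - Q * Q).PosSemidef :=
  P_sq_add_Q_sq_le_P_general A B hAs hBs hAB hBA hsum d hd P Q hP hQ
end

section
/- Let A, B be real symmetric with AB = BA = 0 and A² + B² = N·I, Λ_x diagonal with entries in [0,1], and Λ_y = (I - Λ_x²)^{1/2}. Define C_x = AΛ_xA + BΛ_xB, D_x = AΛ_xB - BΛ_xA, and similarly C_y, D_y with Λ_y. Then C_x² - D_x² + C_y² - D_y² = N²·I. -/
/-!
Because `A * B = B * A = 0`, the cross terms of `C² - D²` vanish and what survives is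
`A Λ (A² + B²) Λ A + B Λ (A² + B²) Λ B = N (A Λ² A + B Λ² B)`. Adding the `x` and `y` versions and
using `Λ_x² + Λ_y² = I` leaves `N (A² + B²) = N² I`.
-/

open Matrix

section Ring

variable {R : Type*} [Ring R] {a b : R}

theorem mul_self_sub_mul_self_of_mul_eq_zero (hab : a * b = 0) (hba : b * a = 0) (l : R) :
    (a * l * a + b * l * b) * (a * l * a + b * l * b)
      - (a * l * b - b * l * a) * (a * l * b - b * l * a)
      = a * l * (a * a + b * b) * l * a + b * l * (a * a + b * b) * l * b := by
  have hab' : ∀ y : R, a * (b * y) = 0 := fun y => by rw [← mul_assoc, hab, zero_mul]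
  have hba' : ∀ y : R, b * (a * y) = 0 := fun y => by rw [← mul_assoc, hba, zero_mul]
  simp only [mul_add, add_mul, mul_sub, sub_mul, mul_assoc, hab', hba', mul_zero]
  abel

variable {K : Type*} [CommRing K] [Algebra K R]

theorem mul_self_sub_mul_self_add_mul_self_sub_mul_self {c : K}
    (hab : a * b = 0) (hba : b * a = 0) (hsum : a * a + b * b = c • 1)
    {x y : R} (hxy : x * x + y * y = 1) :
    (a * x * a + b * x * b) * (a * x * a + b * x * b)
      - (a * x * b - b * x * a) * (a * x * b - b * x * a)
      + (a * y * a + b * y * b) * (a * y * a + b * y * b)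
      - (a * y * b - b * y * a) * (a * y * b - b * y * a) = c ^ 2 • 1 := by
  have hsplit : ∀ l : R, a * l * (a * a + b * b) * l * a + b * l * (a * a + b * b) * l * b
      = c • (a * (l * l) * a + b * (l * l) * b) := fun l => by
    simp only [hsum, mul_smul_comm, smul_mul_assoc, mul_one, smul_add, mul_assoc]
  calc _ = ((a * x * a + b * x * b) * (a * x * a + b * x * b)
          - (a * x * b - b * x * a) * (a * x * b - b * x * a))
        + ((a * y * a + b * y * b) * (a * y * a + b * y * b)
          - (a * y * b - b * y * a) * (a * y * b - b * y * a)) := by abel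
    _ = c • (a * (x * x + y * y) * a + b * (x * x + y * y) * b) := by
        rw [mul_self_sub_mul_self_of_mul_eq_zero hab hba,
          mul_self_sub_mul_self_of_mul_eq_zero hab hba, hsplit, hsplit, ← smul_add]
        congr 1
        simp only [mul_add, add_mul]
        abel
    _ = c ^ 2 • 1 := by rw [hxy, mul_one, mul_one, hsum, smul_smul, sq]

end Ring

theorem Matrix.diagonal_mul_self_add_diagonal_sqrt_one_sub_sq {n : Type*} [Fintype n]
    [DecidableEq n] (d : n → ℝ) (hd : ∀ i, d i ^ 2 ≤ 1) :
    diagonal d * diagonal d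
      + diagonal (fun i => √(1 - d i ^ 2)) * diagonal (fun i => √(1 - d i ^ 2)) = 1 := by
  rw [diagonal_mul_diagonal, diagonal_mul_diagonal, diagonal_add, ← diagonal_one]
  congr 1
  funext i
  rw [Real.mul_self_sqrt (sub_nonneg.mpr (hd i))]
  ring

theorem Cx_Dx_Cy_Dy_identity_general {N : ℕ}
    (A B : Matrix (Fin N) (Fin N) ℝ)
    (hAB : A * B = 0) (hBA : B * A = 0)
    (hsum : A * A + B * B = (N : ℝ) • (1 : Matrix (Fin N) (Fin N) ℝ))
    (dx dy : Fin N → ℝ) (hdx : ∀ i, dx i ∈ Set.Icc (0 : ℝ) 1)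
    (hdy : ∀ i, dy i = Real.sqrt (1 - dx i ^ 2))
    (Cx Dx Cy Dy : Matrix (Fin N) (Fin N) ℝ)
    (hCx : Cx = A * Matrix.diagonal dx * A + B * Matrix.diagonal dx * B)
    (hDx : Dx = A * Matrix.diagonal dx * B - B * Matrix.diagonal dx * A)
    (hCy : Cy = A * Matrix.diagonal dy * A + B * Matrix.diagonal dy * B)
    (hDy : Dy = A * Matrix.diagonal dy * B - B * Matrix.diagonal dy * A) :
    Cx * Cx - Dx * Dx + Cy * Cy - Dy * Dy =
      ((N : ℝ) ^ 2) • (1 : Matrix (Fin N) (Fin N) ℝ) := by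
  have hdx_sq : ∀ i, dx i ^ 2 ≤ 1 := fun i => pow_le_one₀ (hdx i).1 (hdx i).2
  obtain rfl : dy = fun i => √(1 - dx i ^ 2) := funext hdy
  subst hCx hDx hCy hDy
  exact mul_self_sub_mul_self_add_mul_self_sub_mul_self hAB hBA hsum
    (diagonal_mul_self_add_diagonal_sqrt_one_sub_sq dx hdx_sq)

theorem Cx_Dx_Cy_Dy_identity {N : ℕ} (hN : 0 < N)
    (A B : Matrix (Fin N) (Fin N) ℝ)
    (hAs : A.IsSymm) (hBs : B.IsSymm)
    (hAB : A * B = 0) (hBA : B * A = 0)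
    (hsum : A * A + B * B = (N : ℝ) • (1 : Matrix (Fin N) (Fin N) ℝ))
    (dx dy : Fin N → ℝ) (hdx : ∀ i, dx i ∈ Set.Icc (0 : ℝ) 1)
    (hdy : ∀ i, dy i = Real.sqrt (1 - dx i ^ 2))
    (Cx Dx Cy Dy : Matrix (Fin N) (Fin N) ℝ)
    (hCx : Cx = A * Matrix.diagonal dx * A + B * Matrix.diagonal dx * B)
    (hDx : Dx = A * Matrix.diagonal dx * B - B * Matrix.diagonal dx * A)
    (hCy : Cy = A * Matrix.diagonal dy * A + B * Matrix.diagonal dy * B)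
    (hDy : Dy = A * Matrix.diagonal dy * B - B * Matrix.diagonal dy * A) :
    Cx * Cx - Dx * Dx + Cy * Cy - Dy * Dy =
      ((N : ℝ) ^ 2) • (1 : Matrix (Fin N) (Fin N) ℝ) :=
  Cx_Dx_Cy_Dy_identity_general A B hAB hBA hsum dx dy hdx hdy Cx Dx Cy Dy hCx hDx hCy hDy
end

section
/- Under the conditions AB = BA = 0, A² + B² = NI, Λ diagonal with entries in [0,1], P = (1/N)(AΛA + BΛB), and Q = (1/N)(AΛB + BΛA), for any θ: (2cos²θ/(1+cos²θ))·Q² ⪯ (cos²θ/(1+cos²θ))·(I - (P² + (I-P)²)). -/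
/-!
Since `1 - (P² + (1 - P)²) = 2 (P - P²)`, the claim is `2c (P - P² - Q²) ⪰ 0` with `c ≥ 0`.
Expanding `P² + Q²`, every cross term contains `AB` or `BA`, and the surviving terms collapse
through `A² + B² = N` to `N⁻¹ (A Λ² A + B Λ² B)`. Hence
`P - P² - Q² = N⁻¹ (A (Λ - Λ²) A + B (Λ - Λ²) B)`, a congruence of the nonnegative
diagonal `Λ - Λ²` by the symmetric matrices `A` and `B`.
-/

open Matrix

theorem mul_self_add_mul_self_of_mul_eq_zero {R : Type*} [Ring R] {a b : R}
    (hab : a * b = 0) (hba : b * a = 0) (d : R) :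
    (a * d * a + b * d * b) * (a * d * a + b * d * b)
      + (a * d * b + b * d * a) * (a * d * b + b * d * a)
      = a * d * (a * a + b * b) * d * a + b * d * (a * a + b * b) * d * b := by
  have hab' : ∀ x, a * (b * x) = 0 := fun x => by rw [← mul_assoc, hab, zero_mul]
  have hba' : ∀ x, b * (a * x) = 0 := fun x => by rw [← mul_assoc, hba, zero_mul]
  simp only [add_mul, mul_add, mul_assoc, hab', hba', mul_zero, add_zero, zero_add]
  abel

theorem sub_mul_self_add_mul_self_eq {𝕜 R : Type*} [Field 𝕜] [Ring R] [Algebra 𝕜 R]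
    {a b : R} {s : 𝕜} (hab : a * b = 0) (hba : b * a = 0) (hsum : a * a + b * b = s • 1)
    {d p q : R} (hp : p = s⁻¹ • (a * d * a + b * d * b))
    (hq : q = s⁻¹ • (a * d * b + b * d * a)) :
    p - (p * p + q * q) = s⁻¹ • (a * (d - d * d) * a + b * (d - d * d) * b) := by
  have hs : s⁻¹ * (s⁻¹ * s) = s⁻¹ := by
    rw [mul_comm s⁻¹ s, ← mul_assoc]; simpa using mul_inv_mul_cancel s⁻¹
  have hsq : p * p + q * q = s⁻¹ • (a * (d * d) * a + b * (d * d) * b) := by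
    rw [hp, hq, smul_mul_smul_comm, smul_mul_smul_comm, ← smul_add,
      mul_self_add_mul_self_of_mul_eq_zero hab hba, hsum]
    simp only [mul_smul_comm, smul_mul_assoc, mul_one, ← smul_add, smul_smul, mul_assoc, hs]
  rw [hsq, hp, ← smul_sub]
  congr 1
  noncomm_ring

theorem Matrix.IsSymm.posSemidef_mul_diagonal_mul_self {n : Type*} [Fintype n] [DecidableEq n]
    {A : Matrix n n ℝ} (hA : A.IsSymm) {e : n → ℝ} (he : ∀ i, 0 ≤ e i) :
    (A * diagonal e * A).PosSemidef := by
  simpa [conjTranspose_eq_transpose_of_trivial, hA.eq] using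
    (posSemidef_diagonal_iff.mpr he).conjTranspose_mul_mul_same A

theorem one_sub_mul_self_add_one_sub_mul_self {R : Type*} [Ring R] (p : R) :
    1 - (p * p + (1 - p) * (1 - p)) = (2 : ℕ) • (p - p * p) := by
  noncomm_ring

theorem Q_sq_loewner_bound_general {N : ℕ}
    (A B : Matrix (Fin N) (Fin N) ℝ)
    (hAs : A.IsSymm) (hBs : B.IsSymm)
    (hAB : A * B = 0) (hBA : B * A = 0)
    (hsum : A * A + B * B = (N : ℝ) • (1 : Matrix (Fin N) (Fin N) ℝ))
    (d : Fin N → ℝ) (hd : ∀ i, d i ∈ Set.Icc (0 : ℝ) 1)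
    (P Q : Matrix (Fin N) (Fin N) ℝ)
    (hP : P = ((N : ℝ)⁻¹) • (A * Matrix.diagonal d * A + B * Matrix.diagonal d * B))
    (hQ : Q = ((N : ℝ)⁻¹) • (A * Matrix.diagonal d * B + B * Matrix.diagonal d * A))
    (θ : ℝ) :
    ((Real.cos θ ^ 2 / (1 + Real.cos θ ^ 2)) •
        ((1 : Matrix (Fin N) (Fin N) ℝ) - (P * P + (1 - P) * (1 - P))) -
      (2 * Real.cos θ ^ 2 / (1 + Real.cos θ ^ 2)) • (Q * Q)).PosSemidef := by
  set c := Real.cos θ ^ 2 / (1 + Real.cos θ ^ 2)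
  have hc : 0 ≤ c := by positivity
  have he : ∀ i, 0 ≤ d i - d i * d i := fun i =>
    sub_nonneg.mpr (mul_le_of_le_one_right (hd i).1 (hd i).2)
  have hgap : P - (P * P + Q * Q) = (N : ℝ)⁻¹ •
      (A * diagonal (fun i => d i - d i * d i) * A +
        B * diagonal (fun i => d i - d i * d i) * B) := by
    rw [sub_mul_self_add_mul_self_eq hAB hBA hsum hP hQ, diagonal_mul_diagonal, ← diagonal_sub]
  have hpsd : (P - (P * P + Q * Q)).PosSemidef := by
    rw [hgap]
    exact ((hAs.posSemidef_mul_diagonal_mul_self he).add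
      (hBs.posSemidef_mul_diagonal_mul_self he)).smul (by positivity)
  convert hpsd.smul (mul_nonneg zero_le_two hc) using 1
  rw [one_sub_mul_self_add_one_sub_mul_self, mul_div_assoc]
  module

theorem Q_sq_loewner_bound {N : ℕ} (hN : 0 < N)
    (A B : Matrix (Fin N) (Fin N) ℝ)
    (hAs : A.IsSymm) (hBs : B.IsSymm)
    (hAB : A * B = 0) (hBA : B * A = 0)
    (hsum : A * A + B * B = (N : ℝ) • (1 : Matrix (Fin N) (Fin N) ℝ))
    (d : Fin N → ℝ) (hd : ∀ i, d i ∈ Set.Icc (0 : ℝ) 1)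
    (P Q : Matrix (Fin N) (Fin N) ℝ)
    (hP : P = ((N : ℝ)⁻¹) • (A * Matrix.diagonal d * A + B * Matrix.diagonal d * B))
    (hQ : Q = ((N : ℝ)⁻¹) • (A * Matrix.diagonal d * B + B * Matrix.diagonal d * A))
    (θ : ℝ) :
    ((Real.cos θ ^ 2 / (1 + Real.cos θ ^ 2)) •
        ((1 : Matrix (Fin N) (Fin N) ℝ) - (P * P + (1 - P) * (1 - P))) -
      (2 * Real.cos θ ^ 2 / (1 + Real.cos θ ^ 2)) • (Q * Q)).PosSemidef :=
  Q_sq_loewner_bound_general A B hAs hBs hAB hBA hsum d hd P Q hP hQ θ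
end

section
/- If Σ_FreqPrior = I - (2cos²θ/(1+cos²θ))Q² and Σ_FreeInit = P² + (I-P)², with Q² ⪯ P - P² and 0 ⪯ P ⪯ I, then ‖I - Σ_FreqPrior‖_F ≤ (cos²θ/(1+cos²θ))·‖I - Σ_FreeInit‖_F. -/
/-!
With `c = cos²θ / (1 + cos²θ)` both errors are explicit: `I - Σ_FreqPrior = 2c • Q²` and
`I - Σ_FreeInit = 2 • (P - P²)`. The claim therefore reduces to `‖Q²‖_F ≤ ‖P - P²‖_F`, i.e. to
monotonicity of the Frobenius norm on the positive semidefinite cone: for `0 ⪯ A ⪯ B`,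
`‖B‖² - ‖A‖² = tr((B - A) B) + tr(A (B - A))`, and the trace of a product of two positive
semidefinite matrices is nonnegative.
-/

open Matrix
open scoped ComplexOrder

attribute [local instance] Matrix.frobeniusNormedAddCommGroup Matrix.frobeniusNormedSpace

namespace Matrix

variable {m n 𝕜 : Type*} [Fintype m] [Fintype n] [RCLike 𝕜]

theorem PosSemidef.trace_mul_nonneg {A B : Matrix n n 𝕜} (hA : A.PosSemidef)
    (hB : B.PosSemidef) : 0 ≤ (A * B).trace := by
  classical
  obtain ⟨C, rfl⟩ : ∃ C : Matrix n n 𝕜, A = star C * C := by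
    open scoped MatrixOrder in exact CStarAlgebra.nonneg_iff_eq_star_mul_self.mp hA.nonneg
  rw [mul_assoc, trace_mul_comm]
  exact (hB.mul_mul_conjTranspose_same C).trace_nonneg

theorem frobenius_norm_sq_eq_trace (A : Matrix m n 𝕜) :
    ((‖A‖ ^ 2 : ℝ) : 𝕜) = (Aᴴ * A).trace := by
  rw [frobenius_norm_def, ← Real.sqrt_eq_rpow, Real.sq_sqrt (by positivity), Finset.sum_comm]
  simp [trace, mul_apply, RCLike.conj_mul]

theorem IsHermitian.frobenius_norm_sq_eq_trace_mul_self {A : Matrix n n 𝕜} (hA : A.IsHermitian) :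
    ((‖A‖ ^ 2 : ℝ) : 𝕜) = (A * A).trace := by
  rw [frobenius_norm_sq_eq_trace, hA.eq]

theorem frobenius_norm_le_of_posSemidef_of_posSemidef_sub {A B : Matrix n n 𝕜}
    (hA : A.PosSemidef) (hBA : (B - A).PosSemidef) : ‖A‖ ≤ ‖B‖ := by
  have hB : B.PosSemidef := by simpa using hBA.add hA
  have key : 0 ≤ ((B - A) * B).trace + (A * (B - A)).trace :=
    add_nonneg (hBA.trace_mul_nonneg hB) (hA.trace_mul_nonneg hBA)
  rw [sub_mul, mul_sub, trace_sub, trace_sub, add_sub_assoc', sub_add_cancel, sub_nonneg,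
    ← hA.isHermitian.frobenius_norm_sq_eq_trace_mul_self,
    ← hB.isHermitian.frobenius_norm_sq_eq_trace_mul_self, RCLike.ofReal_le_ofReal] at key
  exact (pow_le_pow_iff_left₀ (norm_nonneg A) (norm_nonneg B) two_ne_zero).mp key

theorem frobenius_norm_eq_sqrt_sum_sq (A : Matrix m n ℝ) :
    ‖A‖ = √(∑ i, ∑ j, A i j ^ 2) := by
  simp [frobenius_norm_def, Real.sqrt_eq_rpow]

end Matrix

theorem covariance_error_bound_general {N : ℕ}
    (P Q : Matrix (Fin N) (Fin N) ℝ)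
    (hQs : Q.IsSymm)
    (hQle : ((P - P * P) - Q * Q).PosSemidef)
    (θ : ℝ)
    (SigmaFreq SigmaFree : Matrix (Fin N) (Fin N) ℝ)
    (hfreq : SigmaFreq = (1 : Matrix (Fin N) (Fin N) ℝ) -
      (2 * Real.cos θ ^ 2 / (1 + Real.cos θ ^ 2)) • (Q * Q))
    (hfree : SigmaFree = P * P + (1 - P) * (1 - P)) :
    Real.sqrt (∑ i, ∑ j, (((1 : Matrix (Fin N) (Fin N) ℝ) - SigmaFreq) i j) ^ 2) ≤
      (Real.cos θ ^ 2 / (1 + Real.cos θ ^ 2)) *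
        Real.sqrt (∑ i, ∑ j, (((1 : Matrix (Fin N) (Fin N) ℝ) - SigmaFree) i j) ^ 2) := by
  set c := Real.cos θ ^ 2 / (1 + Real.cos θ ^ 2)
  have hQQ : (Q * Q).PosSemidef := by
    simpa [hQs.eq] using posSemidef_conjTranspose_mul_self Q
  have hfreq' : 1 - SigmaFreq = (2 * c) • (Q * Q) := by
    rw [hfreq, sub_sub_cancel, mul_div_assoc]
  have hfree' : 1 - SigmaFree = (2 : ℝ) • (P - P * P) := by
    rw [hfree, two_smul]
    noncomm_ring
  rw [← frobenius_norm_eq_sqrt_sum_sq, ← frobenius_norm_eq_sqrt_sum_sq, hfreq', hfree',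
    norm_smul, norm_smul, Real.norm_of_nonneg (by positivity), Real.norm_two]
  calc 2 * c * ‖Q * Q‖ ≤ 2 * c * ‖P - P * P‖ :=
        mul_le_mul_of_nonneg_left (frobenius_norm_le_of_posSemidef_of_posSemidef_sub hQQ hQle)
          (by positivity)
    _ = c * (2 * ‖P - P * P‖) := by ring

theorem covariance_error_bound {N : ℕ}
    (P Q : Matrix (Fin N) (Fin N) ℝ)
    (hPs : P.IsSymm) (hQs : Q.IsSymm)
    (hP0 : P.PosSemidef) (hP1 : ((1 : Matrix (Fin N) (Fin N) ℝ) - P).PosSemidef)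
    (hQle : ((P - P * P) - Q * Q).PosSemidef)
    (θ : ℝ)
    (SigmaFreq SigmaFree : Matrix (Fin N) (Fin N) ℝ)
    (hfreq : SigmaFreq = (1 : Matrix (Fin N) (Fin N) ℝ) -
      (2 * Real.cos θ ^ 2 / (1 + Real.cos θ ^ 2)) • (Q * Q))
    (hfree : SigmaFree = P * P + (1 - P) * (1 - P)) :
    Real.sqrt (∑ i, ∑ j, (((1 : Matrix (Fin N) (Fin N) ℝ) - SigmaFreq) i j) ^ 2) ≤
      (Real.cos θ ^ 2 / (1 + Real.cos θ ^ 2)) *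
        Real.sqrt (∑ i, ∑ j, (((1 : Matrix (Fin N) (Fin N) ℝ) - SigmaFree) i j) ^ 2) :=
  covariance_error_bound_general P Q hQs hQle θ SigmaFreq SigmaFree hfreq hfree
end
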